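/- arXiv:2406.10781 — 4 statements merged into one kernel-verified Lean document; each statement's English description precedes it below -/
import Mathlib

section
/- For a compact nonempty set K ⊂ R^1 (the real line) and p ≤ -1, the Riesz p-capacity equals exactly Cap_p(K) = 2^{1/p}·diam(K). -/
/-!
The two-point measure `(δ_a + δ_b)/2` at the extreme points `a ≤ b` of `K` has energy
`(b - a)^{-p} / 2`. Conversely, for `μ` carried by `[a, b]` and `s = -p ≥ 1` we have
`|x - y|^s ≤ (b - a)^{s-1} |x - y|` and `(b - a) |x - y| ≤ (x - a)(b - y) + (y - a)(b - x)`.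
The right-hand side integrates to `2 m₁ m₂` with `m₁ = ∫ (x - a) dμ`, `m₂ = ∫ (b - x) dμ`
and `m₁ + m₂ = b - a`, so by AM-GM the mean distance `∫∫ |x - y| dμ dμ` is at most
`(b - a)/2`.
-/

open MeasureTheory ENNReal

/-- Riesz `p`-energy for `p < 0` of a subset of the real line: the supremum over
probability measures supported on `K` of the double integral of `|x-y|^{-p}`. -/
noncomputable def rieszVneg (p : ℝ) (K : Set ℝ) : ℝ≥0∞ :=
  ⨆ (μ : Measure ℝ) (_ : IsProbabilityMeasure μ) (_ : μ Kᶜ = 0),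
    ∫⁻ x, ∫⁻ y, edist x y ^ (-p) ∂μ ∂μ

/-- Riesz `p`-capacity for `p < 0`. -/
noncomputable def capNeg (p : ℝ) (K : Set ℝ) : ℝ≥0∞ :=
  rieszVneg p K ^ (-1 / p)

open Set

theorem ENNReal.four_mul_le_sq_add (a b : ℝ≥0∞) : 4 * a * b ≤ (a + b) ^ 2 := by
  induction a using ENNReal.recTopCoe with
  | top => simp
  | coe a =>
    induction b using ENNReal.recTopCoe with
    | top => simp
    | coe b => exact_mod_cast _root_.four_mul_le_sq_add a b

theorem ENNReal.rpow_le_rpow_sub_one_mul {t d : ℝ≥0∞} {s : ℝ} (htd : t ≤ d)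
    (hs : 1 ≤ s) : t ^ s ≤ d ^ (s - 1) * t := by
  calc t ^ s = t ^ (s - 1) * t ^ (1 : ℝ) := by
        rw [← ENNReal.rpow_add_of_nonneg _ _ (by linarith) zero_le_one, sub_add_cancel]
    _ ≤ d ^ (s - 1) * t := by
        rw [ENNReal.rpow_one]; gcongr

theorem abs_sub_mul_le_of_mem_Icc {a b x y : ℝ} (hx : x ∈ Icc a b) (hy : y ∈ Icc a b) :
    |x - y| * (b - a) ≤ (x - a) * (b - y) + (y - a) * (b - x) := by
  obtain ⟨hax, hxb⟩ := hx
  obtain ⟨hay, hyb⟩ := hy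
  rcases le_total x y with h | h
  · rw [abs_of_nonpos (by linarith)]
    nlinarith [mul_nonneg (sub_nonneg.2 hax) (sub_nonneg.2 hyb)]
  · rw [abs_of_nonneg (by linarith)]
    nlinarith [mul_nonneg (sub_nonneg.2 hay) (sub_nonneg.2 hxb)]

theorem ofReal_sub_mul_edist_le_of_mem_Icc {a b x y : ℝ} (hx : x ∈ Icc a b)
    (hy : y ∈ Icc a b) :
    ENNReal.ofReal (b - a) * edist x y ≤
      ENNReal.ofReal (x - a) * ENNReal.ofReal (b - y) +
        ENNReal.ofReal (y - a) * ENNReal.ofReal (b - x) := by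
  have := abs_sub_mul_le_of_mem_Icc hx hy
  rw [edist_dist, Real.dist_eq, ← ENNReal.ofReal_mul (by linarith [hx.1, hx.2]),
    ← ENNReal.ofReal_mul (by linarith [hx.1, hx.2]), ← ENNReal.ofReal_mul (by linarith [hy.1]),
    ← ENNReal.ofReal_add (by nlinarith [hx.1, hy.2]) (by nlinarith [hy.1, hx.2]), mul_comm]
  exact ENNReal.ofReal_le_ofReal this

theorem edist_le_ofReal_sub_of_mem_Icc {a b x y : ℝ} (hx : x ∈ Icc a b) (hy : y ∈ Icc a b) :
    edist x y ≤ ENNReal.ofReal (b - a) := by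
  rw [edist_dist]
  exact ENNReal.ofReal_le_ofReal (Real.dist_le_of_mem_Icc hx hy)

theorem ofReal_sub_mul_lintegral_lintegral_edist_le {μ : Measure ℝ} {a b : ℝ}
    (hμ : ∀ᵐ x ∂μ, x ∈ Icc a b) :
    ENNReal.ofReal (b - a) * ∫⁻ x, ∫⁻ y, edist x y ∂μ ∂μ ≤
      2 * ((∫⁻ x, ENNReal.ofReal (x - a) ∂μ) * ∫⁻ x, ENNReal.ofReal (b - x) ∂μ) := by
  set m₁ := ∫⁻ x, ENNReal.ofReal (x - a) ∂μ
  set m₂ := ∫⁻ x, ENNReal.ofReal (b - x) ∂μ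
  calc ENNReal.ofReal (b - a) * ∫⁻ x, ∫⁻ y, edist x y ∂μ ∂μ
      = ∫⁻ x, ∫⁻ y, ENNReal.ofReal (b - a) * edist x y ∂μ ∂μ := by
        rw [← lintegral_const_mul' _ _ ofReal_ne_top]
        congr with x
        exact (lintegral_const_mul' _ _ ofReal_ne_top).symm
    _ ≤ ∫⁻ x, ∫⁻ y, ENNReal.ofReal (x - a) * ENNReal.ofReal (b - y) +
          ENNReal.ofReal (y - a) * ENNReal.ofReal (b - x) ∂μ ∂μ :=
        lintegral_mono_ae (hμ.mono fun x hx => lintegral_mono_ae (hμ.mono fun y hy =>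
          ofReal_sub_mul_edist_le_of_mem_Icc hx hy))
    _ = ∫⁻ x, ENNReal.ofReal (x - a) * m₂ + m₁ * ENNReal.ofReal (b - x) ∂μ := by
        congr with x
        rw [lintegral_add_left (by fun_prop), lintegral_const_mul _ (by fun_prop),
          lintegral_mul_const _ (by fun_prop)]
    _ = 2 * (m₁ * m₂) := by
        rw [lintegral_add_left (by fun_prop), lintegral_mul_const _ (by fun_prop),
          lintegral_const_mul _ (by fun_prop)]
        ring

section Energy

variable {μ : Measure ℝ} [IsProbabilityMeasure μ] {a b : ℝ}

theorem lintegral_lintegral_edist_le (hμ : ∀ᵐ x ∂μ, x ∈ Icc a b) :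
    ∫⁻ x, ∫⁻ y, edist x y ∂μ ∂μ ≤ 2⁻¹ * ENNReal.ofReal (b - a) := by
  set d := ENNReal.ofReal (b - a)
  set m₁ := ∫⁻ x, ENNReal.ofReal (x - a) ∂μ
  set m₂ := ∫⁻ x, ENNReal.ofReal (b - x) ∂μ
  have hmass : m₁ + m₂ = d := by
    rw [← lintegral_add_left (by fun_prop)]
    calc _ = ∫⁻ _, d ∂μ := lintegral_congr_ae <| hμ.mono fun x hx => by
            rw [← ENNReal.ofReal_add (by linarith [hx.1]) (by linarith [hx.2])]
            congr 1; ring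
      _ = d := by simp
  rcases eq_or_ne d 0 with hd | hd
  · calc ∫⁻ x, ∫⁻ y, edist x y ∂μ ∂μ ≤ ∫⁻ x, ∫⁻ y, d ∂μ ∂μ :=
          lintegral_mono_ae (hμ.mono fun x hx =>
            lintegral_mono_ae (hμ.mono fun y hy => edist_le_ofReal_sub_of_mem_Icc hx hy))
      _ = 2⁻¹ * d := by simp [hd]
  · refine (ENNReal.mul_le_mul_iff_right hd ofReal_ne_top).1 ?_
    calc d * ∫⁻ x, ∫⁻ y, edist x y ∂μ ∂μ ≤ 2 * (m₁ * m₂) :=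
          ofReal_sub_mul_lintegral_lintegral_edist_le hμ
      _ = 2⁻¹ * (4 * m₁ * m₂) := by
          rw [show (4 : ℝ≥0∞) = 2 * 2 by norm_num, mul_assoc, mul_assoc,
            ENNReal.inv_mul_cancel_left two_ne_zero ofNat_ne_top]
      _ ≤ 2⁻¹ * d ^ 2 := by rw [← hmass]; gcongr; exact ENNReal.four_mul_le_sq_add m₁ m₂
      _ = d * (2⁻¹ * d) := by ring

theorem lintegral_lintegral_edist_rpow_le {s : ℝ} (hs : 1 ≤ s)
    (hμ : ∀ᵐ x ∂μ, x ∈ Icc a b) :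
    ∫⁻ x, ∫⁻ y, edist x y ^ s ∂μ ∂μ ≤ 2⁻¹ * ENNReal.ofReal (b - a) ^ s := by
  set d := ENNReal.ofReal (b - a)
  have hd : d ^ (s - 1) ≠ ⊤ := rpow_ne_top_of_nonneg (by linarith) ofReal_ne_top
  calc ∫⁻ x, ∫⁻ y, edist x y ^ s ∂μ ∂μ
      ≤ ∫⁻ x, ∫⁻ y, d ^ (s - 1) * edist x y ∂μ ∂μ :=
        lintegral_mono_ae (hμ.mono fun x hx => lintegral_mono_ae (hμ.mono fun y hy =>
          rpow_le_rpow_sub_one_mul (edist_le_ofReal_sub_of_mem_Icc hx hy) hs))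
    _ = d ^ (s - 1) * ∫⁻ x, ∫⁻ y, edist x y ∂μ ∂μ := by
        simp only [lintegral_const_mul' _ _ hd]
    _ ≤ d ^ (s - 1) * (2⁻¹ * d) := by gcongr; exact lintegral_lintegral_edist_le hμ
    _ = 2⁻¹ * d ^ s := by
        rw [mul_left_comm]
        nth_rw 2 [← ENNReal.rpow_one d]
        rw [← ENNReal.rpow_add_of_nonneg _ _ (by linarith) zero_le_one, sub_add_cancel]

end Energy

theorem rieszVneg_le_of_subset_Icc {p a b : ℝ} {K : Set ℝ} (hp : p ≤ -1)
    (hK : K ⊆ Icc a b) :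
    rieszVneg p K ≤ 2⁻¹ * ENNReal.ofReal (b - a) ^ (-p) := by
  refine iSup₂_le fun μ _ => iSup_le fun hμK => ?_
  refine lintegral_lintegral_edist_rpow_le (by linarith) (measure_mono_null ?_ hμK)
  exact fun x hx hxK => hx (hK hxK)

theorem le_rieszVneg_of_mem {p a b : ℝ} {K : Set ℝ} (hp : p < 0) (ha : a ∈ K) (hb : b ∈ K) :
    2⁻¹ * edist a b ^ (-p) ≤ rieszVneg p K := by
  let μ : Measure ℝ := (2 : ℝ≥0∞)⁻¹ • (Measure.dirac a + Measure.dirac b)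
  have hμ : IsProbabilityMeasure μ := ⟨by
    simp [μ, ← two_mul, ENNReal.mul_inv_cancel two_ne_zero ofNat_ne_top]⟩
  have hμK : μ Kᶜ = 0 := by simp [μ, Measure.dirac_apply, ha, hb]
  have henergy : ∫⁻ x, ∫⁻ y, edist x y ^ (-p) ∂μ ∂μ = 2⁻¹ * edist a b ^ (-p) := by
    simp only [μ, smul_add, lintegral_add_measure, lintegral_smul_measure, lintegral_dirac,
      smul_eq_mul, edist_self, ENNReal.zero_rpow_of_pos (neg_pos.2 hp), mul_zero, zero_add,
      add_zero, edist_comm b a]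
    rw [← two_mul, ← mul_assoc, ENNReal.mul_inv_cancel two_ne_zero ofNat_ne_top, one_mul]
  exact henergy ▸ le_iSup₂_of_le μ hμ (le_iSup_of_le hμK le_rfl)

theorem rieszVneg_eq_of_isCompact {p : ℝ} {K : Set ℝ} (hp : p ≤ -1) (hK : IsCompact K)
    (hne : K.Nonempty) : rieszVneg p K = 2⁻¹ * Metric.ediam K ^ (-p) := by
  have hdiam : Metric.ediam K = ENNReal.ofReal (sSup K - sInf K) := Real.ediam_eq hK.isBounded
  have hK_sub : K ⊆ Icc (sInf K) (sSup K) := fun x hx =>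
    ⟨csInf_le hK.bddBelow hx, le_csSup hK.bddAbove hx⟩
  have hedist : edist (sInf K) (sSup K) = Metric.ediam K := by
    rw [hdiam, edist_comm, edist_dist, Real.dist_eq,
      abs_of_nonneg (sub_nonneg.2 (hK_sub (hK.sSup_mem hne)).1)]
  refine le_antisymm (hdiam ▸ rieszVneg_le_of_subset_Icc hp hK_sub) ?_
  exact hedist ▸ le_rieszVneg_of_mem (by linarith) (hK.sInf_mem hne) (hK.sSup_mem hne)

/-- For compact nonempty `K ⊆ ℝ` and `p ≤ -1`,
`Cap_p(K) = 2^{1/p}·diam(K)` exactly. -/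
theorem capNeg_eq_of_dim_one (K : Set ℝ) (hK : IsCompact K) (hne : K.Nonempty)
    (p : ℝ) (hp : p ≤ -1) :
    capNeg p K = (2 : ℝ≥0∞) ^ (1 / p) * EMetric.diam K := by
  have hp0 : p ≠ 0 := by linarith
  have hdiam : Metric.ediam K ^ (-p) ≠ ⊤ :=
    rpow_ne_top_of_nonneg (by linarith) hK.isBounded.ediam_ne_top
  rw [show EMetric.diam K = Metric.ediam K from rfl, capNeg, rieszVneg_eq_of_isCompact hp hK hne,
    ENNReal.mul_rpow_of_ne_top (by simp) hdiam, ← ENNReal.rpow_mul,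
    show -p * (-1 / p) = 1 by field_simp, ENNReal.rpow_one, ENNReal.inv_rpow, ← ENNReal.rpow_neg,
    neg_div, neg_neg]
end

section
/- Left-continuity of Riesz energy from below via truncation: let K ⊂ R^n be compact nonempty, q > 0, and let (p_j) be a sequence of positive reals with p_j → q. Suppose μ_j are probability measures on K with ∫∫|x-y|^{-p_j} dμ_j dμ_j = V_{p_j}(K), and μ_j converges weak-* to a probability measure μ. Then V_q(K) ≤ ∫∫ |x-y|^{-q} dμ dμ ≤ liminf_{j→∞} V_{p_j}(K). -/
open MeasureTheory ENNReal Filter Topology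

/-- Riesz `p`-energy for `p > 0`: the infimum over probability measures supported
on `K` of the double integral of `|x-y|^{-p}`. -/
noncomputable def rieszV {n : ℕ} (p : ℝ) (K : Set (EuclideanSpace ℝ (Fin n))) : ℝ≥0∞ :=
  ⨅ (μ : Measure (EuclideanSpace ℝ (Fin n))) (_ : IsProbabilityMeasure μ) (_ : μ Kᶜ = 0),
    ∫⁻ x, ∫⁻ y, edist x y ^ (-p) ∂μ ∂μ

/-!
Truncated at height `N`, the kernel `|x-y|^{-q}` is bounded and continuous, so its integral
against `μ_j × μ_j` tends to its integral against `μ × μ` (products of weakly convergent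
probability measures converge weakly). On the bounded set `K` the truncated `q`-kernel is at
most `B ^ |q - p_j|` times the `p_j`-kernel, with `B` depending only on `N` and `diam K`; since
`B ^ |q - p_j| → 1`, the truncated energy of `μ` is at most `liminf V_{p_j}(K)`. Monotone
convergence in `N` removes the truncation.
-/

open scoped NNReal BoundedContinuousFunction

namespace ENNReal

theorem rpow_le_rpow_abs {m B : ℝ≥0∞} (hBm : B⁻¹ ≤ m) (hmB : m ≤ B) (r : ℝ) :
    m ^ r ≤ B ^ |r| := by
  rcases le_or_gt 0 r with hr | hr
  · rw [abs_of_nonneg hr]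
    exact rpow_le_rpow hmB hr
  · rw [abs_of_neg hr, ← neg_neg r, rpow_neg, ← inv_rpow, neg_neg]
    exact rpow_le_rpow (inv_le_iff_inv_le.1 hBm) (by linarith)

theorem rpow_le_rpow_abs_mul_rpow {m s B : ℝ≥0∞} {q e : ℝ} (hB : B ≠ ⊤) (hBm : B⁻¹ ≤ m)
    (hmB : m ≤ B) (hms : m ≤ s) (he : 0 ≤ e) :
    m ^ q ≤ B ^ |q - e| * s ^ e := by
  have hm0 : m ≠ 0 := ((ENNReal.inv_pos.2 hB).trans_le hBm).ne'
  calc m ^ q = m ^ (q - e) * m ^ e := by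
        rw [← rpow_add _ _ hm0 (ne_top_of_le_ne_top hB hmB), sub_add_cancel]
    _ ≤ B ^ |q - e| * s ^ e :=
        mul_le_mul' (rpow_le_rpow_abs hBm hmB _) (rpow_le_rpow hms he)

theorem min_rpow_neg_le_rpow_abs_mul_rpow_neg {N t B : ℝ≥0∞} {q e : ℝ} (hq : 0 < q)
    (he : 0 ≤ e) (hB1 : 1 ≤ B) (hB : B ≠ ⊤) (hN : N ≤ B ^ q) (ht : t ≤ B) :
    min N (t ^ (-q)) ≤ B ^ |q - e| * t ^ (-e) := by
  have hBm : B⁻¹ ≤ min B t⁻¹ :=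
    le_min ((ENNReal.inv_le_one.2 hB1).trans hB1) (ENNReal.inv_le_inv.2 ht)
  calc min N (t ^ (-q)) ≤ min B t⁻¹ ^ q := by
        rw [(monotone_rpow_of_nonneg hq.le).map_min, inv_rpow, ← rpow_neg]
        exact min_le_min_right _ hN
    _ ≤ B ^ |q - e| * t ^ (-e) := by
        rw [rpow_neg, ← inv_rpow]
        exact rpow_le_rpow_abs_mul_rpow hB hBm (min_le_left _ _) (min_le_right _ _) he

theorem tendsto_const_rpow_nhds_zero {B : ℝ≥0∞} (h0 : B ≠ 0) (htop : B ≠ ⊤) :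
    Tendsto (fun r : ℝ => B ^ r) (𝓝 0) (𝓝 1) := by
  have hB : 0 < B.toReal := toReal_pos h0 htop
  have h := (ENNReal.continuous_ofReal.tendsto _).comp
    (Real.continuousAt_const_rpow (b := 0) hB.ne').tendsto
  rw [Real.rpow_zero, ofReal_one] at h
  convert h using 2 with r
  rw [Function.comp_apply, ← ofReal_rpow_of_pos hB, ofReal_toReal htop]

theorem liminf_mul_le_of_tendsto_one {ι : Type*} {L : Filter ι} [L.NeBot]
    {u v : ι → ℝ≥0∞} (hu : Tendsto u L (𝓝 1)) : liminf (fun i => u i * v i) L ≤ liminf v L := by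
  have h := liminf_mul_le (u := u) (v := v) (f := L)
    (by simp [hu.limsup_eq]) (by simp [hu.limsup_eq])
  rwa [hu.limsup_eq, one_mul] at h

end ENNReal

theorem lintegral_eq_iSup_lintegral_min_natCast {Y : Type*} [MeasurableSpace Y]
    {f : Y → ℝ≥0∞} (hf : Measurable f) (ν : Measure Y) :
    ∫⁻ y, f y ∂ν = ⨆ N : ℕ, ∫⁻ y, min (N : ℝ≥0∞) (f y) ∂ν := by
  rw [← lintegral_iSup (fun N => measurable_const.min hf)
    (fun N M h y => min_le_min_right _ (Nat.cast_le.2 h))]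
  congr with y
  rw [← iSup_inf_eq, ENNReal.iSup_natCast, top_inf_eq]

namespace MeasureTheory.ProbabilityMeasure

variable {Y ι : Type*} [MeasurableSpace Y] [TopologicalSpace Y] [OpensMeasurableSpace Y]
  {L : Filter ι} {νs : ι → ProbabilityMeasure Y} {ν : ProbabilityMeasure Y}

theorem measure_eq_zero_of_tendsto [HasOuterApproxClosed Y] [L.NeBot]
    (hνs : Tendsto νs L (𝓝 ν)) {U : Set Y} (hU : IsOpen U) (h : ∀ i, (νs i : Measure Y) U = 0) :
    (ν : Measure Y) U = 0 := by
  refine le_antisymm ?_ bot_le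
  simpa [h] using le_liminf_measure_open_of_tendsto hνs hU

theorem tendsto_lintegral_min_of_continuous (hνs : Tendsto νs L (𝓝 ν)) {f : Y → ℝ≥0∞}
    (hf : Continuous f) (c : ℝ≥0) :
    Tendsto (fun i => ∫⁻ y, min (c : ℝ≥0∞) (f y) ∂νs i) L
      (𝓝 (∫⁻ y, min (c : ℝ≥0∞) (f y) ∂ν)) := by
  have hc : ∀ y, min (c : ℝ≥0∞) (f y) ≠ ⊤ :=
    fun y => ne_top_of_le_ne_top coe_ne_top (min_le_left _ _)
  have hle : ∀ y, (min (c : ℝ≥0∞) (f y)).toNNReal ≤ c := fun y => by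
    rw [← ENNReal.coe_le_coe, coe_toNNReal (hc y)]
    exact min_le_left _ _
  let g : Y →ᵇ ℝ≥0 := BoundedContinuousFunction.mkOfBound
    ⟨fun y => (min (c : ℝ≥0∞) (f y)).toNNReal,
      continuousOn_toNNReal.comp_continuous (continuous_const.min hf) hc⟩ c
    fun y y' => by
      rw [NNReal.dist_eq]
      exact (Real.dist_le_of_mem_Icc ⟨NNReal.zero_le_coe, hle y⟩
        ⟨NNReal.zero_le_coe, hle y'⟩).trans_eq (sub_zero _)
  have hg : ∀ y, (g y : ℝ≥0∞) = min (c : ℝ≥0∞) (f y) := fun y => coe_toNNReal (hc y)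
  simpa only [hg] using tendsto_iff_forall_lintegral_tendsto.1 hνs g

end MeasureTheory.ProbabilityMeasure

section Riesz

variable {X : Type*} [PseudoEMetricSpace X]

noncomputable def rieszKernel (p : ℝ) (z : X × X) : ℝ≥0∞ := edist z.1 z.2 ^ (-p)

theorem continuous_rieszKernel (p : ℝ) : Continuous (rieszKernel p : X × X → ℝ≥0∞) :=
  ENNReal.continuous_rpow_const.comp continuous_edist

variable [MeasurableSpace X]

theorem lintegral_prod_rieszKernel [SecondCountableTopology X] [OpensMeasurableSpace X]
    (p : ℝ) (ν : Measure X) [SFinite ν] :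
    ∫⁻ z, rieszKernel p z ∂ν.prod ν = ∫⁻ x, ∫⁻ y, edist x y ^ (-p) ∂ν ∂ν :=
  lintegral_prod _ (continuous_rieszKernel p).aemeasurable

theorem exists_lintegral_min_rieszKernel_le {K : Set X} (hK : Metric.ediam K ≠ ⊤) {q : ℝ}
    (hq : 0 < q) {N : ℝ≥0∞} (hN : N ≠ ⊤) :
    ∃ B : ℝ≥0∞, B ≠ 0 ∧ B ≠ ⊤ ∧ ∀ e, 0 ≤ e → ∀ ν : Measure X, ν Kᶜ = 0 →
      ∫⁻ z, min N (rieszKernel q z) ∂ν.prod ν ≤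
        B ^ |q - e| * ∫⁻ z, rieszKernel e z ∂ν.prod ν := by
  set B := max (max 1 (Metric.ediam K)) (N ^ q⁻¹)
  have hB1 : 1 ≤ B := le_max_of_le_left (le_max_left _ _)
  have hB : B ≠ ⊤ := max_ne_top (max_ne_top one_ne_top hK)
    (rpow_ne_top_of_nonneg (inv_nonneg.2 hq.le) hN)
  have hNB : N ≤ B ^ q := calc
    N = (N ^ q⁻¹) ^ q := by rw [← ENNReal.rpow_mul, inv_mul_cancel₀ hq.ne', rpow_one]
    _ ≤ B ^ q := rpow_le_rpow (le_max_right _ _) hq.le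
  refine ⟨B, (one_pos.trans_le hB1).ne', hB, fun e he ν hν => ?_⟩
  rw [← lintegral_const_mul' _ _ (rpow_ne_top_of_nonneg (abs_nonneg _) hB)]
  have hνK : ∀ᵐ x ∂ν, x ∈ K := mem_ae_iff.2 hν
  refine lintegral_mono_ae ?_
  filter_upwards [Measure.quasiMeasurePreserving_fst.ae hνK,
    Measure.quasiMeasurePreserving_snd.ae hνK] with z hz₁ hz₂
  exact min_rpow_neg_le_rpow_abs_mul_rpow_neg hq he hB1 hB hNB
    ((Metric.edist_le_ediam_of_mem hz₁ hz₂).trans (le_max_of_le_left (le_max_right _ _)))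

end Riesz

theorem rieszV_le_lintegral_lintegral {n : ℕ} {p : ℝ} {K : Set (EuclideanSpace ℝ (Fin n))}
    {μ : Measure (EuclideanSpace ℝ (Fin n))} [IsProbabilityMeasure μ] (hμ : μ Kᶜ = 0) :
    rieszV p K ≤ ∫⁻ x, ∫⁻ y, edist x y ^ (-p) ∂μ ∂μ :=
  iInf_le_of_le μ (iInf_le_of_le inferInstance (iInf_le _ hμ))

theorem rieszV_liminf_general {n : ℕ} (K : Set (EuclideanSpace ℝ (Fin n)))
    (hK : IsCompact K) (q : ℝ) (hq : 0 < q)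
    (p : ℕ → ℝ) (hp : Tendsto p atTop (𝓝 q))
    (μj : ℕ → ProbabilityMeasure (EuclideanSpace ℝ (Fin n)))
    (hsupp : ∀ j, (μj j : Measure (EuclideanSpace ℝ (Fin n))) Kᶜ = 0)
    (hopt : ∀ j, (∫⁻ x, ∫⁻ y, edist x y ^ (-(p j))
        ∂(μj j : Measure (EuclideanSpace ℝ (Fin n)))
        ∂(μj j : Measure (EuclideanSpace ℝ (Fin n)))) = rieszV (p j) K)
    (μ : ProbabilityMeasure (EuclideanSpace ℝ (Fin n)))
    (hconv : Tendsto μj atTop (𝓝 μ)) :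
    rieszV q K ≤ (∫⁻ x, ∫⁻ y, edist x y ^ (-q)
        ∂(μ : Measure (EuclideanSpace ℝ (Fin n)))
        ∂(μ : Measure (EuclideanSpace ℝ (Fin n)))) ∧
    (∫⁻ x, ∫⁻ y, edist x y ^ (-q)
        ∂(μ : Measure (EuclideanSpace ℝ (Fin n)))
        ∂(μ : Measure (EuclideanSpace ℝ (Fin n))))
      ≤ liminf (fun j => rieszV (p j) K) atTop := by
  have hμK : (μ : Measure _) Kᶜ = 0 :=
    ProbabilityMeasure.measure_eq_zero_of_tendsto hconv hK.isClosed.isOpen_compl hsupp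
  refine ⟨rieszV_le_lintegral_lintegral hμK, ?_⟩
  simp_rw [← hopt, ← lintegral_prod_rieszKernel]
  rw [lintegral_eq_iSup_lintegral_min_natCast (continuous_rieszKernel q).measurable]
  refine iSup_le fun N => ?_
  obtain ⟨B, hB0, hB, hbound⟩ :=
    exists_lintegral_min_rieszKernel_le hK.isBounded.ediam_ne_top hq (natCast_ne_top N)
  have hprod : Tendsto (fun j => (μj j).prod (μj j)) atTop (𝓝 (μ.prod μ)) :=
    (ProbabilityMeasure.continuous_prod.tendsto _).comp (hconv.prodMk_nhds hconv)
  have hlim := ProbabilityMeasure.tendsto_lintegral_min_of_continuous hprod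
    (continuous_rieszKernel q) N
  simp only [ENNReal.coe_natCast] at hlim
  have hconst : Tendsto (fun j => B ^ |q - p j|) atTop (𝓝 1) :=
    (ENNReal.tendsto_const_rpow_nhds_zero hB0 hB).comp
      (by simpa using ((tendsto_const_nhds (x := q)).sub hp).abs)
  refine hlim.liminf_eq.symm.trans_le
    ((liminf_le_liminf ?_).trans (ENNReal.liminf_mul_le_of_tendsto_one hconst))
  filter_upwards [hp.eventually (lt_mem_nhds hq)] with j hj
  exact hbound (p j) hj.le _ (hsupp j)

/-- Lower semicontinuity of Riesz energy via truncation: if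
`p_j → q > 0` with `p_j > 0`, `μ_j` are probability measures on the compact set `K`
attaining `V_{p_j}(K)`, and `μ_j → μ` weak-*, then
`V_q(K) ≤ ∫∫ |x-y|^{-q} dμdμ ≤ liminf_j V_{p_j}(K)`. -/
theorem rieszV_liminf {n : ℕ} (K : Set (EuclideanSpace ℝ (Fin n)))
    (hK : IsCompact K) (hne : K.Nonempty) (q : ℝ) (hq : 0 < q)
    (p : ℕ → ℝ) (hppos : ∀ j, 0 < p j) (hp : Tendsto p atTop (𝓝 q))
    (μj : ℕ → ProbabilityMeasure (EuclideanSpace ℝ (Fin n)))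
    (hsupp : ∀ j, (μj j : Measure (EuclideanSpace ℝ (Fin n))) Kᶜ = 0)
    (hopt : ∀ j, (∫⁻ x, ∫⁻ y, edist x y ^ (-(p j))
        ∂(μj j : Measure (EuclideanSpace ℝ (Fin n)))
        ∂(μj j : Measure (EuclideanSpace ℝ (Fin n)))) = rieszV (p j) K)
    (μ : ProbabilityMeasure (EuclideanSpace ℝ (Fin n)))
    (hconv : Tendsto μj atTop (𝓝 μ)) :
    rieszV q K ≤ (∫⁻ x, ∫⁻ y, edist x y ^ (-q)
        ∂(μ : Measure (EuclideanSpace ℝ (Fin n)))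
        ∂(μ : Measure (EuclideanSpace ℝ (Fin n)))) ∧
    (∫⁻ x, ∫⁻ y, edist x y ^ (-q)
        ∂(μ : Measure (EuclideanSpace ℝ (Fin n)))
        ∂(μ : Measure (EuclideanSpace ℝ (Fin n))))
      ≤ liminf (fun j => rieszV (p j) K) atTop :=
  rieszV_liminf_general K hK q hq p hp μj hsupp hopt μ hconv
end

section
/- Right-continuity of energy under an integrability hypothesis: let K ⊂ R^n be compact, q > 0, and suppose μ_q is a probability measure on K achieving V_q(K) < ∞, with ∫∫ |x-y|^{-q_*} dμ_q dμ_q < ∞ for some q_* > q. Then limsup_{p↘q} V_p(K) ≤ V_q(K), and combined with V_q(K) ≤ liminf_{p↘q} V_p(K) one gets lim_{p↘q} V_p(K) = V_q(K) and hence lim_{p↘q} Cap_p(K) = Cap_q(K). -/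
/-!
Write `E_p(μ) = ∫∫ |x - y|^{-p} dμ dμ` (`rieszEnergy p μ`). On `[q, q_*]` the integrand
`|x - y|^{-p}` is dominated by `|x - y|^{-q} + |x - y|^{-q_*}`, which is `μ_q × μ_q`-integrable,
so dominated convergence gives `E_p(μ_q) → E_q(μ_q) = V_q(K)` as `p ↘ q`; since
`V_p(K) ≤ E_p(μ_q)` this is the limsup bound. Conversely `E_p(μ)^{1/p}` is an `L^p(μ × μ)` norm,
nondecreasing in `p` for probability measures, so `V_q(K)^{p/q} ≤ V_p(K)`, which gives the liminf
bound. Finally `0 < V_q(K) < ∞` (the integrand is everywhere positive), and `rpow` is jointly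
continuous at such a base, so the capacities converge too.
-/

open MeasureTheory ENNReal Filter Topology

/-- Riesz `p`-capacity `Cap_p(K) = V_p(K)^{-1/p}` for `p > 0`. -/
noncomputable def rieszCapPos {n : ℕ} (p : ℝ) (K : Set (EuclideanSpace ℝ (Fin n))) : ℝ≥0∞ :=
  rieszV p K ^ (-1 / p)

open scoped NNReal

theorem Filter.Tendsto.ennrpow {α : Type*} {l : Filter α} {u : α → ℝ≥0∞} {v : α → ℝ}
    {x : ℝ≥0∞} {y : ℝ} (hu : Tendsto u l (𝓝 x)) (hv : Tendsto v l (𝓝 y)) (hx₀ : x ≠ 0)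
    (hx : x ≠ ∞) : Tendsto (fun a => u a ^ v a) l (𝓝 (x ^ y)) := by
  have hx' : x.toNNReal ≠ 0 := by simpa [ENNReal.toNNReal_eq_zero_iff, hx] using hx₀
  have hlim : Tendsto (fun a => (((u a).toNNReal ^ v a : ℝ≥0) : ℝ≥0∞)) l
      (𝓝 ((x.toNNReal ^ y : ℝ≥0) : ℝ≥0∞)) :=
    ENNReal.tendsto_coe.mpr (((ENNReal.tendsto_toNNReal hx).comp hu).nnrpow hv (Or.inl hx'))
  rw [coe_rpow_of_ne_zero hx', coe_toNNReal hx] at hlim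
  refine hlim.congr' ?_
  filter_upwards [hu.eventually_ne hx₀, hu.eventually_ne hx] with a ha₀ ha
  rw [coe_rpow_of_ne_zero (by simpa [ENNReal.toNNReal_eq_zero_iff, ha] using ha₀),
    coe_toNNReal ha]

/-- For `t = 0` and `t = ∞` the map is locally constant away from `0`. -/
theorem ENNReal.continuousAt_const_rpow (t : ℝ≥0∞) {a : ℝ} (ha : a ≠ 0) :
    ContinuousAt (fun y : ℝ => t ^ y) a := by
  by_cases ht : t = 0 ∨ t = ∞
  · suffices (fun y : ℝ => t ^ y) =ᶠ[𝓝 a] fun _ => t ^ a from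
      continuousAt_const.congr this.symm
    rcases ha.lt_or_gt with ha | ha
    · filter_upwards [Iio_mem_nhds ha] with y (hy : y < 0)
      rcases ht with rfl | rfl <;> simp [zero_rpow_of_neg, top_rpow_of_neg, hy, ha]
    · filter_upwards [Ioi_mem_nhds ha] with y (hy : 0 < y)
      rcases ht with rfl | rfl <;> simp [zero_rpow_of_pos, top_rpow_of_pos, hy, ha]
  · push Not at ht
    exact tendsto_const_nhds.ennrpow tendsto_id ht.1 ht.2

theorem ENNReal.rpow_le_add_rpow_of_mem_Icc (t : ℝ≥0∞) {x y z : ℝ} (hy : y ∈ Set.Icc x z) :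
    t ^ y ≤ t ^ x + t ^ z := by
  rcases le_total t 1 with ht | ht
  · exact le_add_right (ENNReal.rpow_le_rpow_of_exponent_ge ht hy.1)
  · exact le_add_left (ENNReal.rpow_le_rpow_of_exponent_le ht hy.2)

section Energy

variable {X : Type*} [PseudoEMetricSpace X] [MeasurableSpace X]

noncomputable def rieszEnergy (p : ℝ) (μ : Measure X) : ℝ≥0∞ :=
  ∫⁻ x, ∫⁻ y, edist x y ^ (-p) ∂μ ∂μ

variable [OpensMeasurableSpace X] [SecondCountableTopology X]

theorem measurable_edist_rpow (p : ℝ) :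
    Measurable fun z : X × X => edist z.1 z.2 ^ p :=
  measurable_edist.pow_const p

theorem rieszEnergy_eq_lintegral_prod (p : ℝ) (μ : Measure X) [SFinite μ] :
    rieszEnergy p μ = ∫⁻ z, edist z.1 z.2 ^ (-p) ∂μ.prod μ :=
  (lintegral_prod _ (measurable_edist_rpow _).aemeasurable).symm

theorem tendsto_rieszEnergy_nhdsGT {μ : Measure X} [SFinite μ] {q q' : ℝ} (hq : 0 < q)
    (hqq' : q < q') (hfin : rieszEnergy q μ ≠ ∞) (hfin' : rieszEnergy q' μ ≠ ∞) :
    Tendsto (fun p => rieszEnergy p μ) (𝓝[>] q) (𝓝 (rieszEnergy q μ)) := by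
  simp only [rieszEnergy_eq_lintegral_prod]
  refine tendsto_lintegral_filter_of_dominated_convergence
    (fun z => edist z.1 z.2 ^ (-q') + edist z.1 z.2 ^ (-q))
    (.of_forall fun p => measurable_edist_rpow _) ?_ ?_ ?_
  · filter_upwards [Ioo_mem_nhdsGT hqq'] with p hp
    exact .of_forall fun z =>
      ENNReal.rpow_le_add_rpow_of_mem_Icc _ ⟨by linarith [hp.2], by linarith [hp.1]⟩
  · rw [lintegral_add_left (measurable_edist_rpow _), ← rieszEnergy_eq_lintegral_prod,
      ← rieszEnergy_eq_lintegral_prod]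
    exact ENNReal.add_ne_top.mpr ⟨hfin', hfin⟩
  · have hneg : Tendsto (fun p : ℝ => -p) (𝓝[>] q) (𝓝 (-q)) :=
      (continuous_neg.tendsto q).mono_left nhdsWithin_le_nhds
    exact .of_forall fun z =>
      (ENNReal.continuousAt_const_rpow _ (neg_ne_zero.mpr hq.ne')).tendsto.comp hneg

/-- `E_p(μ)^{1/p}` is the `L^p(μ × μ)` norm of `|x - y|⁻¹`, hence nondecreasing in `p`. -/
theorem rieszEnergy_rpow_div_le (μ : Measure X) [IsProbabilityMeasure μ] {p q : ℝ}
    (hq : 0 < q) (hqp : q ≤ p) : rieszEnergy q μ ^ (p / q) ≤ rieszEnergy p μ := by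
  have hp : 0 < p := hq.trans_le hqp
  have hL : ∀ r, eLpNorm' (fun z : X × X => (edist z.1 z.2)⁻¹) r (μ.prod μ) =
      rieszEnergy r μ ^ (1 / r) := fun r => by
    simp [eLpNorm', rieszEnergy_eq_lintegral_prod, ENNReal.inv_rpow, ENNReal.rpow_neg]
  have h := eLpNorm'_le_eLpNorm'_of_exponent_le (f := fun z : X × X => (edist z.1 z.2)⁻¹)
    hq hqp (μ.prod μ) measurable_edist.inv.aestronglyMeasurable
  rw [hL, hL] at h
  calc rieszEnergy q μ ^ (p / q) = (rieszEnergy q μ ^ (1 / q)) ^ p := by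
        rw [← ENNReal.rpow_mul]; ring_nf
    _ ≤ (rieszEnergy p μ ^ (1 / p)) ^ p := ENNReal.rpow_le_rpow h hp.le
    _ = rieszEnergy p μ := by rw [← ENNReal.rpow_mul, one_div_mul_cancel hp.ne', rpow_one]

end Energy

theorem rieszEnergy_pos {X : Type*} [PseudoMetricSpace X] [MeasurableSpace X]
    [OpensMeasurableSpace X] [SecondCountableTopology X] {μ : Measure X} [SFinite μ]
    (hμ : μ ≠ 0) {p : ℝ} (hp : 0 ≤ p) : 0 < rieszEnergy p μ := by
  rw [rieszEnergy_eq_lintegral_prod, lintegral_pos_iff_support (measurable_edist_rpow _)]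
  have hsupp : Function.support (fun z : X × X => edist z.1 z.2 ^ (-p)) = Set.univ := by
    refine Set.eq_univ_of_forall fun z => Function.mem_support.mpr ?_
    rw [ENNReal.rpow_neg]
    exact ENNReal.inv_ne_zero.mpr (ENNReal.rpow_ne_top_of_nonneg hp (edist_ne_top _ _))
  rw [hsupp, ← Set.univ_prod_univ, Measure.prod_prod]
  have := Measure.measure_univ_pos.mpr hμ
  exact ENNReal.mul_pos this.ne' this.ne'

section RieszV

variable {n : ℕ} {K : Set (EuclideanSpace ℝ (Fin n))}

theorem rieszV_le_rieszEnergy (p : ℝ) {μ : Measure (EuclideanSpace ℝ (Fin n))}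
    [hμ : IsProbabilityMeasure μ] (hK : μ Kᶜ = 0) : rieszV p K ≤ rieszEnergy p μ :=
  iInf_le_of_le μ (iInf_le_of_le hμ (iInf_le_of_le hK le_rfl))

theorem rieszV_rpow_div_le {p q : ℝ} (hq : 0 < q) (hqp : q ≤ p) :
    rieszV q K ^ (p / q) ≤ rieszV p K :=
  le_iInf₂ fun μ _ => le_iInf fun hK =>
    (ENNReal.rpow_le_rpow (rieszV_le_rieszEnergy q hK)
      (div_nonneg (hq.le.trans hqp) hq.le)).trans (rieszEnergy_rpow_div_le μ hq hqp)

theorem rieszV_le_liminf_nhdsGT {q : ℝ} (hq : 0 < q) :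
    rieszV q K ≤ liminf (fun p => rieszV p K) (𝓝[>] q) := by
  have hlim : Tendsto (fun p => rieszV q K ^ (p / q)) (𝓝[>] q) (𝓝 (rieszV q K)) := by
    have hexp : Tendsto (fun p : ℝ => p / q) (𝓝[>] q) (𝓝 1) := by
      rw [← div_self hq.ne']
      exact ((continuous_id.div_const q).tendsto q).mono_left nhdsWithin_le_nhds
    simpa [Function.comp_def] using
      (ENNReal.continuousAt_const_rpow (rieszV q K) one_ne_zero).tendsto.comp hexp
  rw [← hlim.liminf_eq]
  refine liminf_le_liminf ?_
  filter_upwards [self_mem_nhdsWithin] with p hp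
  exact rieszV_rpow_div_le hq hp.le

theorem limsup_rieszV_nhdsGT_le {μ : Measure (EuclideanSpace ℝ (Fin n))}
    [IsProbabilityMeasure μ] (hK : μ Kᶜ = 0) {q q' : ℝ} (hq : 0 < q) (hqq' : q < q')
    (hfin : rieszEnergy q μ ≠ ∞) (hfin' : rieszEnergy q' μ ≠ ∞) :
    limsup (fun p => rieszV p K) (𝓝[>] q) ≤ rieszEnergy q μ :=
  calc limsup (fun p => rieszV p K) (𝓝[>] q)
      ≤ limsup (fun p => rieszEnergy p μ) (𝓝[>] q) :=
        limsup_le_limsup (.of_forall fun p => rieszV_le_rieszEnergy p hK)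
    _ = rieszEnergy q μ := (tendsto_rieszEnergy_nhdsGT hq hqq' hfin hfin').limsup_eq

end RieszV

theorem rieszV_right_continuous_general {n : ℕ} (K : Set (EuclideanSpace ℝ (Fin n)))
    (q qs : ℝ) (hq : 0 < q) (hqs : q < qs)
    (μq : Measure (EuclideanSpace ℝ (Fin n))) [IsProbabilityMeasure μq]
    (hsupp : μq Kᶜ = 0)
    (hach : (∫⁻ x, ∫⁻ y, edist x y ^ (-q) ∂μq ∂μq) = rieszV q K)
    (hfin : rieszV q K < ∞)
    (hdom : (∫⁻ x, ∫⁻ y, edist x y ^ (-qs) ∂μq ∂μq) < ∞) :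
    limsup (fun p : ℝ => rieszV p K) (𝓝[>] q) ≤ rieszV q K ∧
    Tendsto (fun p : ℝ => rieszV p K) (𝓝[>] q) (𝓝 (rieszV q K)) ∧
    Tendsto (fun p : ℝ => rieszCapPos p K) (𝓝[>] q) (𝓝 (rieszCapPos q K)) := by
  change rieszEnergy q μq = rieszV q K at hach
  have hlimsup : limsup (fun p => rieszV p K) (𝓝[>] q) ≤ rieszV q K :=
    (limsup_rieszV_nhdsGT_le hsupp hq hqs (hach ▸ hfin.ne) hdom.ne).trans_eq hach
  have hV : Tendsto (fun p => rieszV p K) (𝓝[>] q) (𝓝 (rieszV q K)) :=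
    tendsto_of_le_liminf_of_limsup_le (rieszV_le_liminf_nhdsGT hq) hlimsup
  have hpos : rieszV q K ≠ 0 :=
    hach ▸ (rieszEnergy_pos (IsProbabilityMeasure.ne_zero μq) hq.le).ne'
  have hexp : Tendsto (fun p : ℝ => -1 / p) (𝓝[>] q) (𝓝 (-1 / q)) :=
    ((continuousAt_const.div continuousAt_id hq.ne').tendsto).mono_left nhdsWithin_le_nhds
  exact ⟨hlimsup, hV, hV.ennrpow hexp hpos hfin.ne⟩

/-- Right-continuity of energy under an integrability hypothesis:
if `μ_q` is a probability measure on the compact set `K` achieving `V_q(K) < ∞` and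
`∫∫ |x-y|^{-q_*} dμ_q dμ_q < ∞` for some `q_* > q > 0`, then
`limsup_{p↘q} V_p(K) ≤ V_q(K)`, `lim_{p↘q} V_p(K) = V_q(K)`, and
`lim_{p↘q} Cap_p(K) = Cap_q(K)`. -/
theorem rieszV_right_continuous {n : ℕ} (K : Set (EuclideanSpace ℝ (Fin n)))
    (hK : IsCompact K) (q qs : ℝ) (hq : 0 < q) (hqs : q < qs)
    (μq : Measure (EuclideanSpace ℝ (Fin n))) [IsProbabilityMeasure μq]
    (hsupp : μq Kᶜ = 0)
    (hach : (∫⁻ x, ∫⁻ y, edist x y ^ (-q) ∂μq ∂μq) = rieszV q K)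
    (hfin : rieszV q K < ∞)
    (hdom : (∫⁻ x, ∫⁻ y, edist x y ^ (-qs) ∂μq ∂μq) < ∞) :
    limsup (fun p : ℝ => rieszV p K) (𝓝[>] q) ≤ rieszV q K ∧
    Tendsto (fun p : ℝ => rieszV p K) (𝓝[>] q) (𝓝 (rieszV q K)) ∧
    Tendsto (fun p : ℝ => rieszCapPos p K) (𝓝[>] q) (𝓝 (rieszCapPos q K)) :=
  rieszV_right_continuous_general K q qs hq hqs μq hsupp hach hfin hdom
end

section
/- Right-continuity of capacity at p = 0 under an integrability hypothesis: let K ⊂ R^n be compact with positive logarithmic capacity, and suppose the logarithmic equilibrium measure μ₀ (the probability measure on K minimizing ∫∫ log(1/|x-y|) dμdμ) satisfies ∫∫ |x-y|^{-q_*} dμ₀ dμ₀ < ∞ for some q_* > 0. Then lim_{p↘0} Cap_p(K) = Cap_0(K), where Cap_0(K) = exp(−V_log(K)) and Cap_p(K) = V_p(K)^{-1/p} for p > 0. -/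
/-!
Write `X(x, y) = log (1 / |x - y|)`. For a probability measure `ν` on `K` with finite `p`-energy,
that energy is the moment generating function `mgf X (ν ⊗ ν) p`. Jensen's inequality and the
minimality of `μ₀` give `V_p(K) ≥ exp (p V_log(K))` for every `p > 0`, i.e. `Cap_p(K) ≤ Cap_0(K)`.
Conversely, testing `V_p(K)` with `μ₀` gives `Cap_p(K) ≥ exp (-cgf X (μ₀ ⊗ μ₀) p / p)`. Since `X` is
bounded below on `K × K` and `exp (q_* X)` is integrable, `0` lies in the interior of the domain of
the mgf, where the cumulant generating function is analytic with `cgf 0 = 0` and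
`cgf' 0 = 𝔼[X] = V_log(K)`; hence `cgf p / p → V_log(K)`.
-/

open MeasureTheory ENNReal Filter Topology

open ProbabilityTheory

theorem ENNReal.rpow_le_rpow_of_nonpos {x y : ℝ≥0∞} {z : ℝ} (hxy : x ≤ y) (hz : z ≤ 0) :
    y ^ z ≤ x ^ z := by
  obtain ⟨w, rfl⟩ : ∃ w, z = -w := ⟨-z, (neg_neg z).symm⟩
  rw [ENNReal.rpow_neg, ENNReal.rpow_neg]
  exact ENNReal.inv_le_inv.mpr (ENNReal.rpow_le_rpow hxy (neg_nonpos.mp hz))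

namespace ProbabilityTheory

variable {Ω : Type*} [MeasurableSpace Ω] {μ : Measure Ω} [IsProbabilityMeasure μ]
  {X : Ω → ℝ}

theorem exp_mul_integral_le_mgf {t : ℝ} (hX : Integrable X μ)
    (ht : Integrable (fun ω => Real.exp (t * X ω)) μ) :
    Real.exp (t * μ[X]) ≤ mgf X μ t := by
  have := convexOn_exp.map_integral_le Real.continuous_exp.continuousOn isClosed_univ
    (ae_of_all _ fun ω => Set.mem_univ (t * X ω)) (hX.const_mul t) ht
  rwa [integral_const_mul] at this

theorem tendsto_cgf_div_nhdsGT_zero (h : 0 ∈ interior (integrableExpSet X μ)) :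
    Tendsto (fun t => cgf X μ t / t) (𝓝[>] 0) (𝓝 μ[X]) := by
  have hderiv : HasDerivAt (cgf X μ) μ[X] 0 := by
    simpa [deriv_cgf_zero h] using (analyticAt_cgf h).differentiableAt.hasDerivAt
  simpa [div_eq_inv_mul] using hderiv.tendsto_slope_zero_right

end ProbabilityTheory

theorem ae_mem_prod_of_measure_compl_eq_zero {β : Type*} [MeasurableSpace β] {ν : Measure β}
    [SFinite ν] {K : Set β} (hνK : ν Kᶜ = 0) : ∀ᵐ z ∂ν.prod ν, z ∈ K ×ˢ K := by
  have hK : ∀ᵐ x ∂ν, x ∈ K := ae_iff.mpr hνK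
  exact (Measure.quasiMeasurePreserving_fst.ae hK).and (Measure.quasiMeasurePreserving_snd.ae hK)

section LogKernel

variable {α : Type*} [PseudoMetricSpace α]

/-- On the diagonal this is `Real.log 0 = 0`. -/
noncomputable def logKernel (z : α × α) : ℝ :=
  Real.log (1 / dist z.1 z.2)

theorem edist_rpow_neg_eq_ofReal_exp {z : α × α} (h : 0 < dist z.1 z.2) (p : ℝ) :
    edist z.1 z.2 ^ (-p) = ENNReal.ofReal (Real.exp (p * logKernel z)) := by
  rw [logKernel, edist_dist, ENNReal.ofReal_rpow_of_pos h, Real.rpow_def_of_pos h, one_div,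
    Real.log_inv]
  ring_nf

theorem neg_logKernel_le_abs_log_diam {K : Set α} (hK : Bornology.IsBounded K) {z : α × α}
    (hz : z ∈ K ×ˢ K) : -logKernel z ≤ |Real.log (Metric.diam K)| := by
  rw [logKernel, one_div, Real.log_inv, neg_neg]
  rcases (dist_nonneg (x := z.1) (y := z.2)).eq_or_lt with h | h
  · rw [← h, Real.log_zero]
    exact abs_nonneg _
  · exact (Real.log_le_log h (Metric.dist_le_diam_of_mem hK hz.1 hz.2)).trans (le_abs_self _)

variable [MeasurableSpace α] {m : Measure (α × α)} {p : ℝ}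

theorem lintegral_edist_rpow_neg_eq_lintegral_ofReal_exp (hpos : ∀ᵐ z ∂m, 0 < dist z.1 z.2) :
    ∫⁻ z, edist z.1 z.2 ^ (-p) ∂m
      = ∫⁻ z, ENNReal.ofReal (Real.exp (p * logKernel z)) ∂m :=
  lintegral_congr_ae (hpos.mono fun _ hz => edist_rpow_neg_eq_ofReal_exp hz p)

theorem lintegral_edist_rpow_neg_eq_ofReal_mgf (hpos : ∀ᵐ z ∂m, 0 < dist z.1 z.2)
    (hexp : Integrable (fun z => Real.exp (p * logKernel z)) m) :
    ∫⁻ z, edist z.1 z.2 ^ (-p) ∂m = ENNReal.ofReal (mgf logKernel m p) := by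
  rw [lintegral_edist_rpow_neg_eq_lintegral_ofReal_exp hpos, mgf,
    ofReal_integral_eq_lintegral_ofReal hexp (ae_of_all _ fun _ => (Real.exp_pos _).le)]

variable [OpensMeasurableSpace α] [SecondCountableTopology α]

theorem measurable_logKernel : Measurable (logKernel : α × α → ℝ) :=
  (measurable_dist.const_div 1).log

theorem lintegral_lintegral_edist_rpow_neg (μ : Measure α) [SFinite μ] (p : ℝ) :
    ∫⁻ x, ∫⁻ y, edist x y ^ (-p) ∂μ ∂μ = ∫⁻ z, edist z.1 z.2 ^ (-p) ∂μ.prod μ :=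
  (lintegral_prod (fun z : α × α => edist z.1 z.2 ^ (-p)) (by fun_prop)).symm

theorem ae_dist_pos_of_lintegral_edist_rpow_neg_ne_top (hp : 0 < p)
    (h : ∫⁻ z, edist z.1 z.2 ^ (-p) ∂m ≠ ∞) : ∀ᵐ z ∂m, 0 < dist z.1 z.2 := by
  filter_upwards [ae_lt_top (by fun_prop) h] with z hz
  refine dist_nonneg.lt_of_ne fun h0 => hz.ne ?_
  rw [edist_dist, ← h0, ENNReal.ofReal_zero, ENNReal.zero_rpow_of_neg (neg_lt_zero.mpr hp)]

theorem integrable_exp_mul_logKernel (hp : 0 < p) (h : ∫⁻ z, edist z.1 z.2 ^ (-p) ∂m ≠ ∞) :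
    Integrable (fun z => Real.exp (p * logKernel z)) m := by
  refine ⟨(measurable_logKernel.const_mul p).exp.aestronglyMeasurable, ?_⟩
  rw [hasFiniteIntegral_iff_ofReal (ae_of_all _ fun _ => (Real.exp_pos _).le),
    ← lintegral_edist_rpow_neg_eq_lintegral_ofReal_exp
      (ae_dist_pos_of_lintegral_edist_rpow_neg_ne_top hp h)]
  exact h.lt_top

variable {K : Set α} (hK : Bornology.IsBounded K) {ν : Measure α} [IsFiniteMeasure ν]
  (hνK : ν Kᶜ = 0)
include hK hνK

theorem integrable_logKernel (hp : 0 < p)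
    (hexp : Integrable (fun z => Real.exp (p * logKernel z)) (ν.prod ν)) :
    Integrable logKernel (ν.prod ν) := by
  refine ((hexp.div_const p).add (integrable_const |Real.log (Metric.diam K)|)).mono'
    measurable_logKernel.aestronglyMeasurable ?_
  filter_upwards [ae_mem_prod_of_measure_compl_eq_zero hνK] with z hz
  have hupper : logKernel z ≤ Real.exp (p * logKernel z) / p := by
    rw [le_div_iff₀ hp]
    linarith [Real.add_one_le_exp (p * logKernel z)]
  have hlower := neg_logKernel_le_abs_log_diam hK hz
  have hnonneg : 0 ≤ Real.exp (p * logKernel z) / p := by positivity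
  simp only [Pi.add_apply, Real.norm_eq_abs, abs_le]
  constructor <;> linarith [abs_nonneg (Real.log (Metric.diam K))]

theorem zero_mem_interior_integrableExpSet_logKernel {q : ℝ} (hq : 0 < q)
    (hexp : Integrable (fun z => Real.exp (q * logKernel z)) (ν.prod ν)) :
    0 ∈ interior (integrableExpSet logKernel (ν.prod ν)) := by
  have hneg : Integrable (fun z => Real.exp (-1 * logKernel z)) (ν.prod ν) := by
    refine .of_bound (measurable_logKernel.const_mul _).exp.aestronglyMeasurable
      (Real.exp |Real.log (Metric.diam K)|) ?_
    filter_upwards [ae_mem_prod_of_measure_compl_eq_zero hνK] with z hz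
    rw [Real.norm_of_nonneg (Real.exp_pos _).le, neg_one_mul]
    exact Real.exp_le_exp.mpr (neg_logKernel_le_abs_log_diam hK hz)
  refine mem_interior_iff_mem_nhds.mpr
    (mem_of_superset (Ioo_mem_nhds neg_one_lt_zero hq) fun t ht => ?_)
  rcases le_total t 0 with ht0 | ht0
  · exact integrable_exp_mul_of_nonpos_of_ge hneg ht0 ht.1.le
  · exact integrable_exp_mul_of_nonneg_of_le hexp ht0 ht.2.le

end LogKernel

section Riesz

variable {n : ℕ} {K : Set (EuclideanSpace ℝ (Fin n))} {p : ℝ}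

theorem rieszV_le_lintegral (μ : Measure (EuclideanSpace ℝ (Fin n))) [IsProbabilityMeasure μ]
    (hμK : μ Kᶜ = 0) : rieszV p K ≤ ∫⁻ x, ∫⁻ y, edist x y ^ (-p) ∂μ ∂μ :=
  iInf_le_of_le μ (iInf_le_of_le ‹_› (iInf_le _ hμK))

section LowerBoundedLogEnergy

variable (hK : Bornology.IsBounded K) {c : ℝ}
  (hmin : ∀ ν : Measure (EuclideanSpace ℝ (Fin n)), IsProbabilityMeasure ν → ν Kᶜ = 0 →
    Integrable logKernel (ν.prod ν) → c ≤ ∫ z, logKernel z ∂(ν.prod ν))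
include hK hmin

theorem ofReal_exp_mul_le_rieszV (hp : 0 < p) :
    ENNReal.ofReal (Real.exp (p * c)) ≤ rieszV p K := by
  refine le_iInf fun ν => le_iInf fun hν => le_iInf fun hνK => ?_
  rw [lintegral_lintegral_edist_rpow_neg]
  by_cases hfin : ∫⁻ z, edist z.1 z.2 ^ (-p) ∂ν.prod ν = ∞
  · simp [hfin]
  have hexp := integrable_exp_mul_logKernel hp hfin
  have hX := integrable_logKernel hK hνK hp hexp
  rw [lintegral_edist_rpow_neg_eq_ofReal_mgf
    (ae_dist_pos_of_lintegral_edist_rpow_neg_ne_top hp hfin) hexp]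
  gcongr
  calc Real.exp (p * c)
      ≤ Real.exp (p * ∫ z, logKernel z ∂(ν.prod ν)) := by
        gcongr
        exact hmin ν hν hνK hX
    _ ≤ _ := exp_mul_integral_le_mgf hX hexp

theorem rieszCapPos_le_ofReal_exp_neg (hp : 0 < p) :
    rieszCapPos p K ≤ ENNReal.ofReal (Real.exp (-c)) := by
  calc rieszCapPos p K ≤ ENNReal.ofReal (Real.exp (p * c)) ^ (-1 / p) :=
        ENNReal.rpow_le_rpow_of_nonpos (ofReal_exp_mul_le_rieszV hK hmin hp)
          (div_nonpos_of_nonpos_of_nonneg (by norm_num) hp.le)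
    _ = ENNReal.ofReal (Real.exp (-c)) := by
        rw [ENNReal.ofReal_rpow_of_pos (Real.exp_pos _), ← Real.exp_mul]
        field_simp

end LowerBoundedLogEnergy

theorem ofReal_exp_neg_cgf_div_le_rieszCapPos (μ : Measure (EuclideanSpace ℝ (Fin n)))
    [IsProbabilityMeasure μ] (hμK : μ Kᶜ = 0) (hp : 0 < p)
    (hpos : ∀ᵐ z ∂μ.prod μ, 0 < dist z.1 z.2)
    (hexp : Integrable (fun z => Real.exp (p * logKernel z)) (μ.prod μ)) :
    ENNReal.ofReal (Real.exp (-(cgf logKernel (μ.prod μ) p / p))) ≤ rieszCapPos p K := by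
  have hV : rieszV p K ≤ ENNReal.ofReal (mgf logKernel (μ.prod μ) p) := by
    rw [← lintegral_edist_rpow_neg_eq_ofReal_mgf hpos hexp,
      ← lintegral_lintegral_edist_rpow_neg]
    exact rieszV_le_lintegral μ hμK
  have hmgf := mgf_pos hexp
  calc ENNReal.ofReal (Real.exp (-(cgf logKernel (μ.prod μ) p / p)))
      = ENNReal.ofReal (mgf logKernel (μ.prod μ) p) ^ (-1 / p) := by
        rw [ENNReal.ofReal_rpow_of_pos hmgf, Real.rpow_def_of_pos hmgf, cgf]
        ring_nf
    _ ≤ rieszCapPos p K :=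
        ENNReal.rpow_le_rpow_of_nonpos hV (div_nonpos_of_nonpos_of_nonneg (by norm_num) hp.le)

end Riesz

theorem rieszCap_right_continuous_at_zero_general {n : ℕ} (K : Set (EuclideanSpace ℝ (Fin n)))
    (hK : IsCompact K)
    (μ₀ : Measure (EuclideanSpace ℝ (Fin n))) [IsProbabilityMeasure μ₀]
    (hsupp : μ₀ Kᶜ = 0)
    (hmin : ∀ ν : Measure (EuclideanSpace ℝ (Fin n)), IsProbabilityMeasure ν → ν Kᶜ = 0 →
      Integrable (fun z : EuclideanSpace ℝ (Fin n) × EuclideanSpace ℝ (Fin n) =>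
        Real.log (1 / dist z.1 z.2)) (ν.prod ν) →
      (∫ z, Real.log (1 / dist z.1 z.2) ∂(μ₀.prod μ₀))
        ≤ ∫ z, Real.log (1 / dist z.1 z.2) ∂(ν.prod ν))
    (qs : ℝ) (hqs : 0 < qs)
    (hdom : (∫⁻ x, ∫⁻ y, edist x y ^ (-qs) ∂μ₀ ∂μ₀) < ∞) :
    Tendsto (fun p : ℝ => rieszCapPos p K) (𝓝[>] 0)
      (𝓝 (ENNReal.ofReal
        (Real.exp (-∫ z, Real.log (1 / dist z.1 z.2) ∂(μ₀.prod μ₀))))) := by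
  rw [lintegral_lintegral_edist_rpow_neg] at hdom
  have hpos := ae_dist_pos_of_lintegral_edist_rpow_neg_ne_top hqs hdom.ne
  have hexp := integrable_exp_mul_logKernel hqs hdom.ne
  have hcgf := tendsto_cgf_div_nhdsGT_zero
    (zero_mem_interior_integrableExpSet_logKernel hK.isBounded hsupp hqs hexp)
  refine tendsto_of_tendsto_of_tendsto_of_le_of_le'
    ((ENNReal.continuous_ofReal.tendsto _).comp hcgf.neg.rexp) tendsto_const_nhds ?_ ?_
  · filter_upwards [Ioc_mem_nhdsGT hqs] with p hp
    exact ofReal_exp_neg_cgf_div_le_rieszCapPos μ₀ hsupp hp.1 hpos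
      (integrable_exp_mul_of_nonneg_of_le hexp hp.1.le hp.2)
  · filter_upwards [self_mem_nhdsWithin] with p hp
    exact rieszCapPos_le_ofReal_exp_neg hK.isBounded hmin hp

/-- Right-continuity of capacity at `p = 0` under an integrability
hypothesis: if `μ₀` is the logarithmic equilibrium measure of the compact set `K`
(a probability measure on `K` with finite logarithmic energy minimizing
`∫∫ log(1/|x-y|) dμdμ`, so `K` has positive logarithmic capacity), and
`∫∫ |x-y|^{-q_*} dμ₀dμ₀ < ∞` for some `q_* > 0`, then
`Cap_p(K) → Cap_0(K) = exp(-V_log(K))` as `p ↘ 0`. -/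
theorem rieszCap_right_continuous_at_zero {n : ℕ} (K : Set (EuclideanSpace ℝ (Fin n)))
    (hK : IsCompact K)
    (μ₀ : Measure (EuclideanSpace ℝ (Fin n))) [IsProbabilityMeasure μ₀]
    (hsupp : μ₀ Kᶜ = 0)
    (hInt : Integrable (fun z : EuclideanSpace ℝ (Fin n) × EuclideanSpace ℝ (Fin n) =>
        Real.log (1 / dist z.1 z.2)) (μ₀.prod μ₀))
    (hmin : ∀ ν : Measure (EuclideanSpace ℝ (Fin n)), IsProbabilityMeasure ν → ν Kᶜ = 0 →
      Integrable (fun z : EuclideanSpace ℝ (Fin n) × EuclideanSpace ℝ (Fin n) =>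
        Real.log (1 / dist z.1 z.2)) (ν.prod ν) →
      (∫ z, Real.log (1 / dist z.1 z.2) ∂(μ₀.prod μ₀))
        ≤ ∫ z, Real.log (1 / dist z.1 z.2) ∂(ν.prod ν))
    (qs : ℝ) (hqs : 0 < qs)
    (hdom : (∫⁻ x, ∫⁻ y, edist x y ^ (-qs) ∂μ₀ ∂μ₀) < ∞) :
    Tendsto (fun p : ℝ => rieszCapPos p K) (𝓝[>] 0)
      (𝓝 (ENNReal.ofReal
        (Real.exp (-∫ z, Real.log (1 / dist z.1 z.2) ∂(μ₀.prod μ₀))))) :=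
  rieszCap_right_continuous_at_zero_general K hK μ₀ hsupp hmin qs hqs hdom
end
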